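/- Let ρ be a positive semidefinite matrix on a finite-dimensional Hilbert space with support S, and let M ⊆ S be a subspace. Then there exist positive semidefinite matrices ρ₁ and ρ₂ such that ρ₁ + ρ₂ = ρ, supp(ρ₁) = M, and supp(ρ₁) ∩ supp(ρ₂) = {0}. -/

import Mathlib

open Matrix BigOperators ComplexOrder

noncomputable def supp {n : ℕ} (A : Matrix (Fin n) (Fin n) ℂ) : Submodule ℂ (Fin n → ℂ) :=
  LinearMap.range A.mulVecLin

section aux
variable {n : ℕ}

local notation "e" => WithLp.linearEquiv 2 ℂ (Fin n → ℂ)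

lemma toEuclideanLin_mul (A B : Matrix (Fin n) (Fin n) ℂ) :
    Matrix.toEuclideanLin (A * B) = Matrix.toEuclideanLin A ∘ₗ Matrix.toEuclideanLin B := by
  ext x
  simp [Matrix.toEuclideanLin_apply, Matrix.mulVec_mulVec]

lemma toEuclideanLin_one : Matrix.toEuclideanLin (1 : Matrix (Fin n) (Fin n) ℂ) = LinearMap.id := by
  ext x
  simp [Matrix.toEuclideanLin_apply]

lemma supp_eq (A : Matrix (Fin n) (Fin n) ℂ) :
    supp A = Submodule.map (e : EuclideanSpace ℂ (Fin n) →ₗ[ℂ] (Fin n → ℂ))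
      (LinearMap.range (Matrix.toEuclideanLin A)) := by
  ext x
  simp only [supp, LinearMap.mem_range, Submodule.mem_map, Matrix.toEuclideanLin_apply]
  constructor
  · rintro ⟨y, hy⟩
    exact ⟨Matrix.toEuclideanLin A ((WithLp.equiv 2 _).symm y), ⟨_, rfl⟩, by
      simp only [Matrix.toEuclideanLin_apply, WithLp.linearEquiv_apply, WithLp.equiv_symm_apply, WithLp.ofLp_toLp]
      exact hy⟩
  · rintro ⟨z, ⟨w, rfl⟩, hz⟩
    exact ⟨WithLp.equiv 2 _ w, by simpa [Matrix.toEuclideanLin_apply, WithLp.linearEquiv] using hz⟩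

end aux

theorem stmt_0 {n : ℕ} (ρ : Matrix (Fin n) (Fin n) ℂ) (hρ : ρ.PosSemidef)
    (M : Submodule ℂ (Fin n → ℂ)) (hM : M ≤ supp ρ) :
    ∃ ρ₁ ρ₂ : Matrix (Fin n) (Fin n) ℂ,
      ρ₁.PosSemidef ∧ ρ₂.PosSemidef ∧ ρ₁ + ρ₂ = ρ ∧
      supp ρ₁ = M ∧ supp ρ₁ ⊓ supp ρ₂ = ⊥ := by
  classical
  set E := EuclideanSpace ℂ (Fin n)
  set e : E ≃ₗ[ℂ] (Fin n → ℂ) := WithLp.linearEquiv 2 ℂ (Fin n → ℂ) with he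
  set s : Matrix (Fin n) (Fin n) ℂ := (open scoped MatrixOrder in CFC.sqrt ρ) with hsdef
  have hs : s * s = ρ := open scoped MatrixOrder in CFC.sqrt_mul_sqrt_self ρ hρ.nonneg
  have hsherm : s.IsHermitian := open scoped MatrixOrder in (CFC.sqrt_nonneg ρ).posSemidef.1
  set T : E →ₗ[ℂ] E := Matrix.toEuclideanLin s with hT
  have hTsymm : T.IsSymmetric := Matrix.isHermitian_iff_isSymmetric.mp hsherm
  set S : Submodule ℂ E := LinearMap.range T with hS
  -- kernel = orthogonal complement of range
  have hker : LinearMap.ker T = Sᗮ := by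
    ext x
    constructor
    · intro hx
      rw [Submodule.mem_orthogonal]
      rintro u ⟨z, rfl⟩
      rw [hTsymm z x, LinearMap.mem_ker.mp hx, inner_zero_right]
    · intro hx
      rw [LinearMap.mem_ker, ← inner_self_eq_zero (𝕜 := ℂ), hTsymm x (T x)]
      exact (Submodule.mem_orthogonal' S x).mp hx _ ⟨T x, rfl⟩
  have hsup : S ⊔ Sᗮ = (⊤ : Submodule ℂ E) := Submodule.sup_orthogonal_of_hasOrthogonalProjection
  have hmapTS : Submodule.map T S = S := by
    apply le_antisymm
    · rintro v ⟨z, -, rfl⟩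
      exact LinearMap.mem_range_self T z
    intro v hv
    obtain ⟨z, rfl⟩ := hv
    have hz : z ∈ S ⊔ Sᗮ := by rw [hsup]; trivial
    obtain ⟨a, ha, b, hb, rfl⟩ := Submodule.mem_sup.mp hz
    have hbk : T b = 0 := LinearMap.mem_ker.mp (hker ▸ hb)
    refine ⟨a, ha, ?_⟩
    simp [map_add, hbk]
  have hsuppρ : supp ρ = Submodule.map (e : E →ₗ[ℂ] (Fin n → ℂ)) S := by
    rw [supp_eq, ← hs, toEuclideanLin_mul, ← hT, LinearMap.range_comp, ← hS, hmapTS]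
  set M' : Submodule ℂ E := Submodule.comap (e : E →ₗ[ℂ] (Fin n → ℂ)) M with hM'
  have hMM' : Submodule.map (e : E →ₗ[ℂ] (Fin n → ℂ)) M' = M :=
    Submodule.map_comap_eq_of_surjective e.surjective M
  have hM'S : M' ≤ S := by
    intro x hx
    have := hM (hx : e x ∈ M)
    rw [hsuppρ] at this
    obtain ⟨y, hy, hxy⟩ := this
    rwa [show y = x from e.injective hxy] at hy
  set K : Submodule ℂ E := Submodule.comap T M' with hK
  have hkerK : LinearMap.ker T ≤ K := by
    intro x hx
    simp only [hK, Submodule.mem_comap, LinearMap.mem_ker.mp hx]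
    exact M'.zero_mem
  set π : E →ₗ[ℂ] E := (K.subtypeL.comp K.orthogonalProjectionOnto).toLinearMap with hπ
  have hπsymm : π.IsSymmetric := K.starProjection_isSymmetric
  have hπmem : ∀ x : E, π x ∈ K := fun x => (K.orthogonalProjectionOnto x).2
  have hπfix : ∀ x ∈ K, π x = x := fun x hx => K.starProjection_eq_self_iff.mpr hx
  have hππ : π ∘ₗ π = π := LinearMap.ext fun x => hπfix _ (hπmem x)
  set P : Matrix (Fin n) (Fin n) ℂ := Matrix.toEuclideanLin.symm π with hPdef
  have hP : Matrix.toEuclideanLin P = π := Matrix.toEuclideanLin.apply_symm_apply π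
  have hPherm : P.IsHermitian := Matrix.isHermitian_iff_isSymmetric.mpr (hP ▸ hπsymm)
  have hPP : P * P = P := by
    apply Matrix.toEuclideanLin.injective
    rw [toEuclideanLin_mul, hP, hππ]
  set Q : Matrix (Fin n) (Fin n) ℂ := 1 - P with hQ
  have hQherm : Q.IsHermitian := by
    simp only [hQ, Matrix.IsHermitian, Matrix.conjTranspose_sub, Matrix.conjTranspose_one,
      hPherm.eq]
  have hQQ : Q * Q = Q := by
    simp only [hQ, mul_sub, sub_mul, one_mul, mul_one, hPP]
    abel
  refine ⟨s * P * s, s * Q * s, ?_, ?_, ?_, ?_, ?_⟩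
  · have : s * P * s = (P * s)ᴴ * (P * s) := by
      rw [Matrix.conjTranspose_mul, hPherm.eq, hsherm.eq, Matrix.mul_assoc s P (P * s),
        ← Matrix.mul_assoc P P s, hPP, ← Matrix.mul_assoc]
    rw [this]
    exact Matrix.posSemidef_conjTranspose_mul_self _
  · have : s * Q * s = (Q * s)ᴴ * (Q * s) := by
      rw [Matrix.conjTranspose_mul, hQherm.eq, hsherm.eq, Matrix.mul_assoc s Q (Q * s),
        ← Matrix.mul_assoc Q Q s, hQQ, ← Matrix.mul_assoc]
    rw [this]
    exact Matrix.posSemidef_conjTranspose_mul_self _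
  · rw [← hs]
    simp only [hQ, mul_sub, sub_mul, mul_one, one_mul]
    abel
  · have hsupp1 : supp (s * P * s) =
        Submodule.map (e : E →ₗ[ℂ] (Fin n → ℂ)) (Submodule.map T (Submodule.map π S)) := by
      rw [supp_eq, toEuclideanLin_mul, toEuclideanLin_mul, hP, ← hT, LinearMap.range_comp,
        ← hS, Submodule.map_comp]
    have hπS : Submodule.map π S ≤ K := by
      rintro x ⟨y, -, rfl⟩; exact hπmem y
    have hTK : Submodule.map T K = M' := by
      rw [hK, Submodule.map_comap_eq, ← hS, inf_eq_right.mpr hM'S]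
    have key : Submodule.map T (Submodule.map π S) = M' := by
      apply le_antisymm
      · exact hTK ▸ Submodule.map_mono hπS
      · intro m hm
        have hm2 : m ∈ Submodule.map T K := hTK ▸ hm
        obtain ⟨k, hk, rfl⟩ := hm2
        have hk' : k ∈ S ⊔ Sᗮ := by rw [hsup]; trivial
        obtain ⟨a, ha, b, hb, hab⟩ := Submodule.mem_sup.mp hk'
        have hbker : b ∈ LinearMap.ker T := by rw [hker]; exact hb
        have haK : a ∈ K := by
          have hab' : a = k - b := by rw [← hab]; abel
          rw [hab']
          exact K.sub_mem hk (hkerK hbker)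
        refine ⟨π a, ⟨a, ha, rfl⟩, ?_⟩
        rw [hπfix a haK, ← hab, map_add, LinearMap.mem_ker.mp hbker, add_zero]
    rw [hsupp1, key, hMM']
  · have hsupp1 : supp (s * P * s) =
        Submodule.map (e : E →ₗ[ℂ] (Fin n → ℂ)) (Submodule.map T (Submodule.map π S)) := by
      rw [supp_eq, toEuclideanLin_mul, toEuclideanLin_mul, hP, ← hT, LinearMap.range_comp,
        ← hS, Submodule.map_comp]
    set π' : E →ₗ[ℂ] E := LinearMap.id - π with hπ'def
    have hπ' : Matrix.toEuclideanLin Q = π' := by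
      rw [hQ, map_sub, toEuclideanLin_one, hP, hπ'def]
    have hsupp2 : supp (s * Q * s) =
        Submodule.map (e : E →ₗ[ℂ] (Fin n → ℂ))
          (Submodule.map T (Submodule.map π' S)) := by
      rw [supp_eq, toEuclideanLin_mul, toEuclideanLin_mul, hπ', ← hT, LinearMap.range_comp,
        ← hS, Submodule.map_comp]
    have key2 : Submodule.map T (Submodule.map π S) ⊓
        Submodule.map T (Submodule.map π' S) = ⊥ := by
      rw [eq_bot_iff]
      rintro v ⟨hv1, hv2⟩
      obtain ⟨x, hxm, rfl⟩ := hv1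
      obtain ⟨y, hym, hvy⟩ := hv2
      obtain ⟨a, -, rfl⟩ := hxm
      obtain ⟨b, -, rfl⟩ := hym
      have hdiff : π a - π' b ∈ LinearMap.ker T := by
        rw [LinearMap.mem_ker, map_sub, hvy, sub_self]
      have hdK : π a - π' b ∈ K := hkerK hdiff
      have h1 : π (π a) = π a := hπfix _ (hπmem a)
      have h2 : π (π' b) = 0 := by
        simp only [hπ'def, LinearMap.sub_apply, LinearMap.id_apply, map_sub]
        rw [hπfix _ (hπmem b), sub_self]
      have h3 : π (π a - π' b) = π a - π' b := hπfix _ hdK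
      rw [map_sub, h1, h2, sub_zero] at h3
      have h4 : π' b = 0 := by
        have h5 := h3.symm
        rwa [sub_eq_self] at h5
      rw [Submodule.mem_bot, ← hvy, h4, map_zero]
    rw [hsupp1, hsupp2, ← Submodule.map_inf (e : E →ₗ[ℂ] (Fin n → ℂ)) e.injective, key2, Submodule.map_bot]
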